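/- arXiv:2109.10396 — 5 statements merged into one kernel-verified Lean document; each statement's English description precedes it below -/
import Mathlib

section
/- For any even positive integer ℓ and any real t with t ≤ ℓ/e², one has e^t ≤ (1 + e^{-ℓ/2}) E_ℓ(t), where E_ℓ(t) = Σ_{s=0}^{ℓ} t^s/s!. -/
open Finset Real

lemma hasDerivAt_partial_exp (n : ℕ) (t : ℝ) :
    HasDerivAt (fun x : ℝ => ∑ s ∈ range (n + 1), x ^ s / (Nat.factorial s))
      (∑ s ∈ range n, t ^ s / (Nat.factorial s)) t := by
  have h : HasDerivAt (fun x : ℝ => ∑ s ∈ range (n + 1), x ^ s / (Nat.factorial s))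
      (∑ s ∈ range (n + 1), (s : ℝ) * t ^ (s - 1) / (Nat.factorial s)) t := by
    apply HasDerivAt.fun_sum
    intro s _
    simpa [div_eq_mul_inv] using (hasDerivAt_pow s t).div_const (Nat.factorial s : ℝ)
  convert h using 1
  rw [Finset.sum_range_succ']
  simp only [Nat.cast_zero, pow_zero, Nat.factorial_zero]
  norm_num
  apply Finset.sum_congr rfl
  intro s _
  rw [Nat.factorial_succ]
  push_cast
  field_simp

lemma sign_partial_exp (n : ℕ) : ∀ t ≤ (0:ℝ),
    (-1 : ℝ) ^ n * (Real.exp t - ∑ s ∈ range (n + 1), t ^ s / (Nat.factorial s)) ≤ 0 := by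
  induction n with
  | zero =>
    intro t ht
    simpa using Real.exp_le_one_iff.2 ht
  | succ n ih =>
    intro t ht
    set f : ℝ → ℝ := fun x =>
      (-1 : ℝ) ^ (n + 1) * (Real.exp x - ∑ s ∈ range (n + 2), x ^ s / (Nat.factorial s)) with hf
    have hderiv : ∀ x : ℝ, HasDerivAt f
        ((-1 : ℝ) ^ (n + 1) * (Real.exp x - ∑ s ∈ range (n + 1), x ^ s / (Nat.factorial s))) x := by
      intro x
      exact ((Real.hasDerivAt_exp x).sub (hasDerivAt_partial_exp (n + 1) x)).const_mul _
    have hmono : MonotoneOn f (Set.Iic (0:ℝ)) := by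
      apply monotoneOn_of_deriv_nonneg (convex_Iic 0)
      · exact fun x _ => ((hderiv x).continuousAt).continuousWithinAt
      · intro x _
        exact (hderiv x).differentiableAt.differentiableWithinAt
      · intro x hx
        rw [interior_Iic] at hx
        rw [(hderiv x).deriv]
        have := ih x (le_of_lt hx)
        have h2 : (-1:ℝ)^(n+1) * (Real.exp x - ∑ s ∈ range (n + 1), x ^ s / (Nat.factorial s))
            = -((-1:ℝ)^n * (Real.exp x - ∑ s ∈ range (n + 1), x ^ s / (Nat.factorial s))) := by
          ring
        rw [h2]
        linarith
    have h0 : f 0 = 0 := by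
      simp [hf, Finset.sum_range_succ']
    have := hmono (Set.mem_Iic.2 ht) (Set.mem_Iic.2 le_rfl) ht
    rw [h0] at this
    exact this

lemma pow_div_exp_le_factorial (n : ℕ) : ((n : ℝ) / Real.exp 1) ^ n ≤ (Nat.factorial n : ℝ) := by
  have h1 : (n : ℝ) ^ n / (Nat.factorial n : ℝ) ≤ Real.exp n := by
    calc (n : ℝ) ^ n / (Nat.factorial n : ℝ)
        ≤ ∑ s ∈ range (n + 1), (n : ℝ) ^ s / (Nat.factorial s : ℝ) :=
          Finset.single_le_sum (f := fun s => (n : ℝ) ^ s / (Nat.factorial s : ℝ))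
            (fun i _ => by positivity) (Finset.self_mem_range_succ n)
      _ ≤ Real.exp n := Real.sum_le_exp_of_nonneg (Nat.cast_nonneg n) _
  have hfac : (0 : ℝ) < (Nat.factorial n : ℝ) := by exact_mod_cast Nat.factorial_pos n
  have hexp : (0 : ℝ) < Real.exp 1 ^ n := by positivity
  rw [div_pow, div_le_iff₀ hexp]
  have : Real.exp 1 ^ n = Real.exp n := by
    rw [← Real.exp_nat_mul, mul_one]
  rw [this]
  rw [div_le_iff₀ hfac] at h1
  linarith

lemma exp_tsum (t : ℝ) : Real.exp t = ∑' n : ℕ, t ^ n / (Nat.factorial n : ℝ) := by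
  rw [Real.exp_eq_exp_ℝ]
  exact congrFun NormedSpace.exp_eq_tsum_div t

/-- For `ℓ` an even positive integer and `t ≤ ℓ/e²`, one has
`e^t ≤ (1 + e^{-ℓ/2}) E_ℓ(t)` where `E_ℓ(t) = ∑_{s=0}^{ℓ} t^s/s!`. -/
theorem exp_le_partial_exp_sum (ℓ : ℕ) (hℓ : 0 < ℓ) (hev : Even ℓ) (t : ℝ)
    (ht : t ≤ (ℓ : ℝ) / Real.exp 1 ^ 2) :
    Real.exp t ≤ (1 + Real.exp (-(ℓ : ℝ) / 2)) *
      ∑ s ∈ Finset.range (ℓ + 1), t ^ s / (Nat.factorial s) := by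
  set E := ∑ s ∈ Finset.range (ℓ + 1), t ^ s / (Nat.factorial s : ℝ) with hE
  set ε := Real.exp (-(ℓ : ℝ) / 2) with hε
  have hεpos : 0 < ε := Real.exp_pos _
  have hc1 : (2.7 : ℝ) < Real.exp 1 := lt_trans (by norm_num) Real.exp_one_gt_d9
  rcases le_or_gt t 0 with htn | htp
  · -- negative case: exp t ≤ E since ℓ is even
    have h := sign_partial_exp ℓ t htn
    rw [hev.neg_one_pow, one_mul, sub_nonpos] at h
    have hEpos : 0 ≤ E := le_trans (Real.exp_pos t).le h
    nlinarith
  · -- positive case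
    have hE1 : 1 ≤ E := by
      have := Finset.single_le_sum (f := fun s => t ^ s / (Nat.factorial s : ℝ))
        (fun i _ => by positivity) (Finset.mem_range.2 (Nat.succ_pos ℓ))
      simpa using this
    set f : ℕ → ℝ := fun n => t ^ n / (Nat.factorial n : ℝ) with hfdef
    have hsum : Summable f := Real.summable_pow_div_factorial t
    have hsplit : E + ∑' k : ℕ, f (k + (ℓ + 1)) = Real.exp t := by
      rw [exp_tsum t]
      exact Summable.sum_add_tsum_nat_add (ℓ + 1) hsum
    -- geometric bound on the tail
    set r : ℝ := t / (ℓ + 2) with hr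
    have hr0 : 0 ≤ r := by positivity
    have he2 : (4 : ℝ) ≤ Real.exp 1 ^ 2 := by nlinarith
    have htℓ2 : t ≤ ((ℓ : ℝ) + 2) / Real.exp 1 ^ 2 := le_trans ht (by
      apply div_le_div_of_nonneg_right ?_ (by positivity)
      · linarith)
    have hr4 : r ≤ 1 / 4 := by
      rw [hr, div_le_div_iff₀ (by positivity) (by norm_num)]
      have : Real.exp 1 ^ 2 * t ≤ (ℓ : ℝ) + 2 := by
        rw [← le_div_iff₀' (by positivity)]
        exact htℓ2
      nlinarith
    have hr1 : r < 1 := lt_of_le_of_lt hr4 (by norm_num)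
    set A : ℝ := t ^ (ℓ + 1) / (Nat.factorial (ℓ + 1) : ℝ) with hA
    have hA0 : 0 ≤ A := by positivity
    have hterm : ∀ k : ℕ, f (k + (ℓ + 1)) ≤ A * r ^ k := by
      intro k
      have hfacle : ((Nat.factorial (ℓ + 1) : ℝ)) * ((ℓ : ℝ) + 2) ^ k
          ≤ (Nat.factorial (k + (ℓ + 1)) : ℝ) := by
        have := Nat.factorial_mul_pow_le_factorial (m := ℓ + 1) (n := k)
        rw [add_comm k (ℓ + 1)]
        exact_mod_cast (by push_cast; exact_mod_cast this)
      have h1 : f (k + (ℓ + 1)) = t ^ (ℓ + 1) * t ^ k / (Nat.factorial (k + (ℓ + 1)) : ℝ) := by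
        rw [hfdef]
        simp only
        rw [add_comm k (ℓ + 1), pow_add]
      have h2 : A * r ^ k = t ^ (ℓ + 1) * t ^ k
          / ((Nat.factorial (ℓ + 1) : ℝ) * ((ℓ : ℝ) + 2) ^ k) := by
        rw [hA, hr, div_pow, div_mul_div_comm]
      rw [h1, h2]
      apply div_le_div_of_nonneg_left (by positivity) (by positivity) hfacle
    have hgsum : Summable (fun k : ℕ => A * r ^ k) :=
      (summable_geometric_of_lt_one hr0 hr1).mul_left A
    have htail : ∑' k : ℕ, f (k + (ℓ + 1)) ≤ A * (1 - r)⁻¹ := by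
      calc ∑' k : ℕ, f (k + (ℓ + 1)) ≤ ∑' k : ℕ, A * r ^ k :=
            Summable.tsum_le_tsum hterm ((summable_nat_add_iff (ℓ + 1)).2 hsum) hgsum
        _ = A * (1 - r)⁻¹ := by
            rw [tsum_mul_left, tsum_geometric_of_lt_one hr0 hr1]
    -- bound A
    have hAle : A ≤ Real.exp (-((ℓ : ℝ) + 1)) := by
      have ht1 : t ^ (ℓ + 1) ≤ (((ℓ : ℝ) + 1) / Real.exp 1 ^ 2) ^ (ℓ + 1) := by
        apply pow_le_pow_left₀ htp.le
        exact le_trans ht (div_le_div_of_nonneg_right (by linarith) (by positivity))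
      have hfl : (((ℓ : ℝ) + 1) / Real.exp 1) ^ (ℓ + 1) ≤ (Nat.factorial (ℓ + 1) : ℝ) := by
        have := pow_div_exp_le_factorial (ℓ + 1)
        push_cast at this
        exact this
      have hflpos : (0 : ℝ) < (((ℓ : ℝ) + 1) / Real.exp 1) ^ (ℓ + 1) := by positivity
      have : A ≤ (((ℓ : ℝ) + 1) / Real.exp 1 ^ 2) ^ (ℓ + 1)
          / (((ℓ : ℝ) + 1) / Real.exp 1) ^ (ℓ + 1) := by
        rw [hA]
        apply div_le_div₀ (by positivity) ht1 hflpos hfl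
      calc A ≤ (((ℓ : ℝ) + 1) / Real.exp 1 ^ 2) ^ (ℓ + 1)
            / (((ℓ : ℝ) + 1) / Real.exp 1) ^ (ℓ + 1) := this
        _ = ((Real.exp 1)⁻¹) ^ (ℓ + 1) := by
            rw [← div_pow]
            congr 1
            field_simp
        _ = Real.exp (-((ℓ : ℝ) + 1)) := by
            rw [← Real.exp_neg, ← Real.exp_nat_mul]
            push_cast
            ring_nf
    have hinv : (1 - r)⁻¹ ≤ 2 := by
      rw [inv_le_comm₀ (by linarith) (by norm_num)]
      linarith
    have htail2 : ∑' k : ℕ, f (k + (ℓ + 1)) ≤ ε := by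
      have h1 : A * (1 - r)⁻¹ ≤ Real.exp (-((ℓ : ℝ) + 1)) * 2 := by
        have h0 : 0 ≤ (1 - r)⁻¹ := by rw [inv_nonneg]; linarith
        nlinarith [Real.exp_pos (-((ℓ : ℝ) + 1))]
      have h2 : Real.exp (-((ℓ : ℝ) + 1)) * 2 ≤ ε := by
        rw [hε, show (-(ℓ : ℝ) / 2) = (-((ℓ : ℝ) + 1)) + ((ℓ : ℝ) / 2 + 1) by ring,
          Real.exp_add]
        have h3 : (2 : ℝ) ≤ Real.exp ((ℓ : ℝ) / 2 + 1) := by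
          have : Real.exp 1 ≤ Real.exp ((ℓ : ℝ) / 2 + 1) :=
            Real.exp_le_exp.2 (le_add_of_nonneg_left (by positivity))
          linarith
        nlinarith [Real.exp_pos (-((ℓ : ℝ) + 1))]
      linarith
    have : Real.exp t ≤ E + ε := by
      rw [← hsplit]
      linarith
    nlinarith
end

section
/- Let a : M → C be a completely multiplicative function on the monoid M of monic polynomials over F_q[x], let I be an interval, and s a natural number. Then (Σ_{P : deg P ∈ I} a(P))^s = s! · Σ_{f : all prime factors of f have degree in I, Ω(f) = s} a(f) ν(f), where the first sum is over monic irreducible polynomials P with deg P ∈ I, Ω(f) is the number of prime factors of f counted with multiplicity, and ν is the multiplicative function with ν(P^a) = 1/a!. -/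
open UniqueFactorizationMonoid

/-- The multiplicative function `ν` with `ν(P^a) = 1/a!` on monic polynomials. -/
noncomputable def nuFF {F : Type*} [Field F] [DecidableEq F] (f : Polynomial F) : ℂ :=
  ∏ P ∈ (normalizedFactors f).toFinset,
    ((Multiset.count P (normalizedFactors f)).factorial : ℂ)⁻¹

section Aux

variable {F : Type*} [Field F] [DecidableEq F]

lemma aux_finite_natDegree_le [Fintype F] (n : ℕ) :
    {p : Polynomial F | p.natDegree ≤ n}.Finite := by
  refine Set.Finite.of_finite_image (f := fun p : Polynomial F => fun i : Fin (n + 1) => p.coeff i)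
    (Set.toFinite _) ?_
  intro p hp q hq h
  ext i
  rcases le_or_gt i n with hi | hi
  · exact congrFun h ⟨i, Nat.lt_succ_of_le hi⟩
  · rw [Polynomial.coeff_eq_zero_of_natDegree_lt (lt_of_le_of_lt hp hi),
      Polynomial.coeff_eq_zero_of_natDegree_lt (lt_of_le_of_lt hq hi)]

lemma aux_assoc_natDegree {p q : Polynomial F} (h : Associated p q) :
    p.natDegree = q.natDegree := by
  obtain ⟨u, rfl⟩ := h
  by_cases hp : p = 0
  · simp [hp]
  · rw [Polynomial.natDegree_mul hp u.ne_zero,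
      Polynomial.natDegree_eq_zero_of_isUnit u.isUnit, add_zero]

lemma aux_count_sum_smul {α : Type*} [DecidableEq α] (S : Finset α) (k : α → ℕ) (Q : α) :
    Multiset.count Q (∑ P ∈ S, k P • ({P} : Multiset α)) = if Q ∈ S then k Q else 0 := by
  rw [Multiset.count_sum']
  simp only [Multiset.count_nsmul, Multiset.count_singleton, mul_ite, mul_one, mul_zero]
  exact Finset.sum_ite_eq S Q k

lemma aux_nf_prod (S : Finset (Polynomial F))
    (hS : ∀ P ∈ S, P.Monic ∧ Irreducible P) (k : Polynomial F → ℕ) :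
    normalizedFactors (∏ P ∈ S, P ^ k P)
      = ∑ P ∈ S, k P • ({P} : Multiset (Polynomial F)) := by
  induction S using Finset.cons_induction with
  | empty => simpa using normalizedFactors_one
  | cons P S hP ih =>
    rw [Finset.prod_cons, Finset.sum_cons]
    have hPm := hS P (Finset.mem_cons_self _ _)
    have hrest : (∏ Q ∈ S, Q ^ k Q) ≠ 0 :=
      Finset.prod_ne_zero_iff.mpr fun Q hQ =>
        pow_ne_zero _ (hS Q (Finset.mem_cons_of_mem hQ)).1.ne_zero
    rw [normalizedFactors_mul (pow_ne_zero _ hPm.1.ne_zero) hrest,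
      normalizedFactors_pow, normalizedFactors_irreducible hPm.2,
      hPm.1.normalize_eq_self, ih fun Q hQ => hS Q (Finset.mem_cons_of_mem hQ)]

end Aux

/-- For a completely multiplicative `a` on monic polynomials over 𝔽_q[x], an
interval (finite set) `I` of degrees and `s ∈ ℕ`:
`(∑_{P : deg P ∈ I} a(P))^s = s! ∑_{f : P∣f ⟹ deg P ∈ I, Ω(f) = s} a(f) ν(f)`,
where `P` runs over monic irreducibles and `Ω(f)` counts prime factors with
multiplicity. -/
theorem power_of_prime_sum {F : Type*} [Field F] [Fintype F] [DecidableEq F]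
    (a : Polynomial F → ℂ) (ha1 : a 1 = 1)
    (hmul : ∀ f g : Polynomial F, a (f * g) = a f * a g)
    (I : Finset ℕ) (s : ℕ) :
    (∑' P : {P : Polynomial F // P.Monic ∧ Irreducible P ∧ P.natDegree ∈ I}, a P.val) ^ s
      = (Nat.factorial s : ℂ) *
        ∑' f : {f : Polynomial F // f.Monic ∧
            (∀ P : Polynomial F, Prime P → P ∣ f → P.natDegree ∈ I) ∧
            Multiset.card (normalizedFactors f) = s},
          a f.val * nuFF f.val := by
  classical
  set B := I.sup id with hBdef
  have h1 : {P : Polynomial F | P.Monic ∧ Irreducible P ∧ P.natDegree ∈ I}.Finite :=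
    (aux_finite_natDegree_le B).subset fun P hP => Finset.le_sup (f := id) hP.2.2
  have h2 : {f : Polynomial F | f.Monic ∧
      (∀ P : Polynomial F, Prime P → P ∣ f → P.natDegree ∈ I) ∧
      Multiset.card (normalizedFactors f) = s}.Finite := by
    refine (aux_finite_natDegree_le (s * B)).subset fun f hf => ?_
    obtain ⟨hmon, hdegI, hcard⟩ := hf
    have hne : f ≠ 0 := hmon.ne_zero
    have hassoc : Associated (normalizedFactors f).prod f := prod_normalizedFactors hne
    have hdeg : f.natDegree = ((normalizedFactors f).prod).natDegree :=
      (aux_assoc_natDegree hassoc).symm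
    have hle : ((normalizedFactors f).prod).natDegree ≤
        ((normalizedFactors f).map Polynomial.natDegree).sum :=
      Polynomial.natDegree_multiset_prod_le _
    have hsum : ((normalizedFactors f).map Polynomial.natDegree).sum ≤
        Multiset.card ((normalizedFactors f).map Polynomial.natDegree) • B := by
      refine Multiset.sum_le_card_nsmul _ _ fun x hx => ?_
      obtain ⟨Q, hQ, rfl⟩ := Multiset.mem_map.mp hx
      exact Finset.le_sup (f := id)
        (hdegI Q (prime_of_normalized_factor Q hQ) (dvd_of_mem_normalizedFactors hQ))
    simp only [Multiset.card_map, hcard, smul_eq_mul] at hsum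
    calc f.natDegree = _ := hdeg
      _ ≤ _ := hle
      _ ≤ s * B := hsum
  haveI fin1 : Fintype {P : Polynomial F // P.Monic ∧ Irreducible P ∧ P.natDegree ∈ I} :=
    h1.fintype
  haveI fin2 : Fintype {f : Polynomial F // f.Monic ∧
      (∀ P : Polynomial F, Prime P → P ∣ f → P.natDegree ∈ I) ∧
      Multiset.card (normalizedFactors f) = s} := h2.fintype
  rw [tsum_fintype, tsum_fintype]
  set S₁ : Finset (Polynomial F) := h1.toFinset with hS₁def
  set S₂ : Finset (Polynomial F) := h2.toFinset with hS₂def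
  have e1 : (∑ P : {P : Polynomial F // P.Monic ∧ Irreducible P ∧ P.natDegree ∈ I}, a P.val)
      = ∑ P ∈ S₁, a P := (Finset.sum_subtype S₁ (fun x => h1.mem_toFinset) a).symm
  have e2 : (∑ f : {f : Polynomial F // f.Monic ∧
        (∀ P : Polynomial F, Prime P → P ∣ f → P.natDegree ∈ I) ∧
        Multiset.card (normalizedFactors f) = s}, a f.val * nuFF f.val)
      = ∑ f ∈ S₂, a f * nuFF f :=
    (Finset.sum_subtype S₂ (fun x => h2.mem_toFinset) (fun f => a f * nuFF f)).symm
  rw [e1, e2]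
  have hS₁ : ∀ P ∈ S₁, P.Monic ∧ Irreducible P := fun P hP =>
    ⟨(h1.mem_toFinset.mp hP).1, (h1.mem_toFinset.mp hP).2.1⟩
  let A : Polynomial F →* ℂ := ⟨⟨a, ha1⟩, hmul⟩
  rw [Finset.sum_pow_eq_sum_piAntidiag S₁ a s, Finset.mul_sum]
  refine Finset.sum_bij (fun k _ => ∏ P ∈ S₁, P ^ k P) ?_ ?_ ?_ ?_
  · -- maps into S₂
    intro k hk
    rw [Finset.mem_piAntidiag] at hk
    have hnf := aux_nf_prod S₁ hS₁ k
    rw [h2.mem_toFinset]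
    refine ⟨Polynomial.monic_prod_of_monic _ _ fun P hP => (hS₁ P hP).1.pow _, ?_, ?_⟩
    · intro Q hQ hQdvd
      obtain ⟨P, hP, hPdvd⟩ := hQ.exists_mem_finset_dvd hQdvd
      have hQP : Q ∣ P := hQ.dvd_of_dvd_pow hPdvd
      have hassoc : Associated Q P := hQ.irreducible.associated_of_dvd (hS₁ P hP).2 hQP
      rw [aux_assoc_natDegree hassoc]
      exact (h1.mem_toFinset.mp hP).2.2
    · rw [hnf, Multiset.card_sum S₁ (fun P => k P • ({P} : Multiset (Polynomial F)))]
      simpa using hk.1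
  · -- injective
    intro k₁ hk₁ k₂ hk₂ heq
    rw [Finset.mem_piAntidiag] at hk₁ hk₂
    funext i
    by_cases hi : i ∈ S₁
    · have := congrArg (fun f => Multiset.count i (normalizedFactors f)) heq
      simpa [aux_nf_prod S₁ hS₁, aux_count_sum_smul, hi] using this
    · have e1 : k₁ i = 0 := by by_contra h; exact hi (hk₁.2 i h)
      have e2 : k₂ i = 0 := by by_contra h; exact hi (hk₂.2 i h)
      rw [e1, e2]
  · -- surjective
    intro f hf
    rw [h2.mem_toFinset] at hf
    obtain ⟨hmon, hdegI, hcard⟩ := hf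
    have hne : f ≠ 0 := hmon.ne_zero
    have hsub : (normalizedFactors f).toFinset ⊆ S₁ := by
      intro Q hQ
      rw [Multiset.mem_toFinset] at hQ
      rw [h1.mem_toFinset]
      have hQn : normalize Q = Q := normalize_normalized_factor Q hQ
      have hQne : Q ≠ 0 := (prime_of_normalized_factor Q hQ).ne_zero
      refine ⟨?_, irreducible_of_normalized_factor Q hQ,
        hdegI Q (prime_of_normalized_factor Q hQ) (dvd_of_mem_normalizedFactors hQ)⟩
      rw [← hQn]
      exact Polynomial.monic_normalize hQne
    refine ⟨fun Q => Multiset.count Q (normalizedFactors f), ?_, ?_⟩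
    · rw [Finset.mem_piAntidiag]
      constructor
      · rw [← Finset.sum_subset hsub fun x _ hx =>
            Multiset.count_eq_zero.mpr fun hc => hx (Multiset.mem_toFinset.mpr hc),
          Multiset.toFinset_sum_count_eq, hcard]
      · intro i hi
        exact hsub (Multiset.mem_toFinset.mpr (Multiset.count_pos.mp (Nat.pos_of_ne_zero hi)))
    · show (∏ P ∈ S₁, P ^ Multiset.count P (normalizedFactors f)) = f
      rw [← Finset.prod_multiset_count_of_subset _ S₁ hsub]
      have hmp : ((normalizedFactors f).prod).Monic := by
        have h := Polynomial.monic_multiset_prod_of_monic (normalizedFactors f) id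
          fun Q hQ => (hS₁ Q (hsub (Multiset.mem_toFinset.mpr hQ))).1
        simpa using h
      exact Polynomial.eq_of_monic_of_associated hmp hmon (prod_normalizedFactors hne)
  · -- values agree
    intro k hk
    rw [Finset.mem_piAntidiag] at hk
    have hnf := aux_nf_prod S₁ hS₁ k
    have hcount : ∀ Q, Multiset.count Q (normalizedFactors (∏ P ∈ S₁, P ^ k P))
        = if Q ∈ S₁ then k Q else 0 := by
      intro Q; rw [hnf]; exact aux_count_sum_smul S₁ k Q
    have haprod : a (∏ P ∈ S₁, P ^ k P) = ∏ P ∈ S₁, a P ^ k P := by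
      rw [show a (∏ P ∈ S₁, P ^ k P) = A (∏ P ∈ S₁, P ^ k P) from rfl, map_prod]
      exact Finset.prod_congr rfl fun P _ => map_pow A P (k P)
    have hnu : nuFF (∏ P ∈ S₁, P ^ k P) = ∏ P ∈ S₁, ((k P).factorial : ℂ)⁻¹ := by
      unfold nuFF
      have hsub : (normalizedFactors (∏ P ∈ S₁, P ^ k P)).toFinset ⊆ S₁ := by
        intro Q hQ
        rw [Multiset.mem_toFinset, ← Multiset.count_pos, hcount] at hQ
        by_contra h
        simp [h] at hQ
      rw [Finset.prod_subset hsub fun Q _ hQn => by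
        rw [Multiset.count_eq_zero.mpr fun hc => hQn (Multiset.mem_toFinset.mpr hc)]; simp]
      exact Finset.prod_congr rfl fun Q hQ => by rw [hcount, if_pos hQ]
    rw [haprod, hnu]
    have hspec := Nat.multinomial_spec S₁ k
    rw [hk.1] at hspec
    have hcast : (∏ i ∈ S₁, ((k i).factorial : ℂ)) * (Nat.multinomial S₁ k : ℂ)
        = (s.factorial : ℂ) := by exact_mod_cast congrArg (Nat.cast : ℕ → ℂ) hspec
    have hprodne : (∏ i ∈ S₁, ((k i).factorial : ℂ)) ≠ 0 :=
      Finset.prod_ne_zero_iff.mpr fun i _ =>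
        Nat.cast_ne_zero.mpr (Nat.factorial_ne_zero _)
    have hm : (Nat.multinomial S₁ k : ℂ)
        = (s.factorial : ℂ) * ∏ P ∈ S₁, ((k P).factorial : ℂ)⁻¹ := by
      rw [Finset.prod_inv_distrib, eq_mul_inv_iff_mul_eq₀ hprodne, mul_comm]
      exact hcast
    rw [hm]
    ring
end

section
/- For any sequence g : N → C, parameter N ∈ N, integer m, and radius 0 < r < 1 within the radius of absolute convergence of Σ g(n) u^n, one has Σ_{n ≤ N, n ≡ m (mod 2)} g(n) = (1/(2πi)) ∮_{|w|=r} (Σ_{n=0}^∞ g(n) w^n) · δ(m, N; w) · dw/w^{N+1}, where δ(m,N;w) = (1/2)(1/(1-w) + (-1)^{N-m}/(1+w)). -/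
open Real Complex Metric MeasureTheory

lemma circleIntegral_tsum_zpow (a : ℕ → ℂ) {r : ℝ} (hr0 : 0 < r) (N : ℕ)
    (ha : Summable fun n => ‖a n‖ * r ^ n) :
    (∮ w in C(0, r), ∑' j : ℕ, a j * w ^ ((j : ℤ) - (N + 1)))
      = 2 * Real.pi * Complex.I * a N := by
  have hne : ∀ θ : ℝ, circleMap 0 r θ ≠ 0 := fun θ => circleMap_ne_center hr0.ne'
  have habs : ∀ θ : ℝ, ‖circleMap 0 r θ‖ = r := by
    intro θ; rw [norm_circleMap_zero, abs_of_pos hr0]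
  -- the continuous summands
  have hcont : ∀ j : ℕ, Continuous fun θ : ℝ =>
      deriv (circleMap 0 r) θ • (a j * circleMap 0 r θ ^ ((j : ℤ) - (N + 1))) := by
    intro j
    simp only [deriv_circleMap, smul_eq_mul]
    exact ((continuous_circleMap 0 r).mul continuous_const).mul
      (continuous_const.mul (((continuous_circleMap 0 r).zpow₀ _ fun θ => Or.inl (hne θ))))
  set F : ℕ → C(ℝ, ℂ) := fun j =>
    ⟨fun θ => deriv (circleMap 0 r) θ • (a j * circleMap 0 r θ ^ ((j : ℤ) - (N + 1))), hcont j⟩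
    with hF
  have hnorm : ∀ j θ, ‖F j θ‖ = ‖a j‖ * r ^ j * (r ^ (N : ℤ))⁻¹ := by
    intro j θ
    simp only [hF, ContinuousMap.coe_mk, smul_eq_mul, deriv_circleMap]
    rw [norm_mul, norm_mul, norm_mul,
      habs, Complex.norm_I, norm_zpow, habs]
    rw [show ((j:ℤ) - ((N:ℤ) + 1)) = (j:ℤ) + (-(N:ℤ) + (-1)) by ring, zpow_add₀ hr0.ne',
      zpow_add₀ hr0.ne', zpow_natCast, zpow_neg, zpow_neg, zpow_natCast, zpow_one]
    field_simp
  have hFsum : Summable fun j : ℕ =>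
      ‖(F j).restrict (⟨Set.uIcc 0 (2 * Real.pi), isCompact_uIcc⟩ : TopologicalSpace.Compacts ℝ)‖ := by
    apply Summable.of_nonneg_of_le (fun j => norm_nonneg _)
      (fun j => ?_) ((ha.mul_right ((r ^ (N : ℤ))⁻¹)))
    rw [ContinuousMap.norm_le _ (by positivity)]
    rintro ⟨x, hx⟩
    rw [ContinuousMap.restrict_apply]
    exact le_of_eq (hnorm j x)
  have hswap := intervalIntegral.tsum_intervalIntegral_eq_of_summable_norm
    (a := 0) (b := 2 * Real.pi) hFsum
  -- identify the RHS of hswap with the circle integral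
  rw [circleIntegral]
  have : ∀ θ : ℝ, (∑' j : ℕ, F j θ)
      = deriv (circleMap 0 r) θ • ∑' j : ℕ, a j * circleMap 0 r θ ^ ((j : ℤ) - (N + 1)) := by
    intro θ
    simp only [hF, ContinuousMap.coe_mk, smul_eq_mul]
    exact (tsum_mul_left)
  rw [intervalIntegral.integral_congr (g := fun θ => ∑' j : ℕ, F j θ) (fun θ _ => (this θ).symm)]
  rw [← hswap]
  -- now evaluate each integral
  have hterm : ∀ j : ℕ, (∫ θ in (0:ℝ)..2 * Real.pi, F j θ)
      = a j * ∮ w in C(0, r), w ^ ((j : ℤ) - (N + 1)) := by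
    intro j
    rw [← circleIntegral.integral_const_mul]
    rfl
  rw [tsum_congr hterm]
  rw [tsum_eq_single N ?h]
  · have : ((N : ℤ) - (N + 1)) = -1 := by ring
    rw [this]
    have h2 : (∮ w in C(0, r), w ^ (-1 : ℤ)) = 2 * Real.pi * I := by
      simpa [sub_zero, zpow_neg_one] using circleIntegral.integral_sub_center_inv 0 hr0.ne'
    rw [h2]; ring
  case h =>
    intro j hj
    have hne' : ((j : ℤ) - (N + 1)) ≠ -1 := by
      intro h; apply hj; omega
    rw [show (∮ w in C(0, r), w ^ ((j:ℤ) - (N + 1))) = 0 from by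
      simpa [sub_zero] using circleIntegral.integral_sub_zpow_of_ne hne' 0 0 r, mul_zero]

/-- Parity-restricted Perron formula: for a sequence `g`, an integer `m`, and
`0 < r < 1` with `∑ g(n) uⁿ` absolutely convergent on `|u| ≤ r`,
`∑_{n ≤ N, n ≡ m (2)} g(n) = (1/2πi) ∮_{|w|=r} (∑ g(n) wⁿ) δ(m,N;w) dw / w^{N+1}`,
where `δ(m,N;w) = (1/2)(1/(1-w) + (-1)^{N-m}/(1+w))`. -/
theorem perron_parity (g : ℕ → ℂ) (N : ℕ) (m : ℤ) (r : ℝ) (hr0 : 0 < r) (hr1 : r < 1)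
    (hconv : Summable fun n => ‖g n‖ * r ^ n) :
    ∑ n ∈ (Finset.range (N + 1)).filter (fun n : ℕ => ((n : ℤ) % 2 = m % 2)), g n
      = (1 / (2 * Real.pi * Complex.I)) *
        ∮ w in C(0, r), (∑' n : ℕ, g n * w ^ n) *
          ((1 / 2 : ℂ) * (1 / (1 - w) + (-1 : ℂ) ^ ((N : ℤ) - m) / (1 + w))) / w ^ (N + 1) := by
  set c : ℂ := (-1 : ℂ) ^ ((N : ℤ) - m) with hc
  set ε : ℕ → ℂ := fun k => (1 / 2 : ℂ) * (1 + c * (-1) ^ k) with hεdef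
  set a : ℕ → ℂ := fun j => ∑ kl ∈ Finset.HasAntidiagonal.antidiagonal j, g kl.1 * ε kl.2 with hadef
  have hcnorm : ‖c‖ = 1 := by rw [hc, norm_zpow]; simp
  have hεnorm : ∀ k, ‖ε k‖ ≤ 1 := by
    intro k
    calc ‖ε k‖ ≤ ‖(1 / 2 : ℂ)‖ * (‖(1 : ℂ)‖ + ‖c * (-1 : ℂ) ^ k‖) := by
          rw [hεdef]; simp only []
          rw [norm_mul]
          gcongr
          exact norm_add_le _ _
      _ = 1 := by rw [norm_mul, hcnorm, norm_pow]; norm_num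
  have hprod : ∀ (w : ℂ) (j : ℕ),
      (∑ kl ∈ Finset.HasAntidiagonal.antidiagonal j, (g kl.1 * w ^ kl.1) * (ε kl.2 * w ^ kl.2)) = a j * w ^ j := by
    intro w j
    rw [hadef]; simp only []
    rw [Finset.sum_mul]
    refine Finset.sum_congr rfl fun kl hkl => ?_
    have h : kl.1 + kl.2 = j := Finset.HasAntidiagonal.mem_antidiagonal.mp hkl
    rw [← h, pow_add]; ring
  have hrnorm : ‖(r : ℂ)‖ = r := by
    rw [Complex.norm_real, Real.norm_of_nonneg hr0.le]
  have ha : Summable fun j => ‖a j‖ * r ^ j := by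
    have h1 : Summable fun n => ‖g n * (r : ℂ) ^ n‖ := by
      simp only [norm_mul, norm_pow, hrnorm]; exact hconv
    have h2 : Summable fun k => ‖ε k * (r : ℂ) ^ k‖ := by
      refine Summable.of_nonneg_of_le (fun _ => norm_nonneg _) (fun k => ?_)
        (summable_geometric_of_lt_one hr0.le hr1)
      rw [norm_mul, norm_pow, hrnorm]
      exact mul_le_of_le_one_left (by positivity) (hεnorm k)
    have h3 := summable_norm_sum_mul_antidiagonal_of_summable_norm h1 h2
    have h4 : (fun j => ‖∑ kl ∈ Finset.HasAntidiagonal.antidiagonal j,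
        (g kl.1 * (r : ℂ) ^ kl.1) * (ε kl.2 * (r : ℂ) ^ kl.2)‖)
        = fun j => ‖a j‖ * r ^ j := by
      funext j
      rw [hprod (r : ℂ) j, norm_mul, norm_pow, hrnorm]
    rwa [h4] at h3
  have hEqOn : Set.EqOn
      (fun w => (∑' n : ℕ, g n * w ^ n) *
        ((1 / 2 : ℂ) * (1 / (1 - w) + c / (1 + w))) / w ^ (N + 1))
      (fun w => ∑' j : ℕ, a j * w ^ ((j : ℤ) - (N + 1))) (Metric.sphere (0 : ℂ) r) := by
    intro w hw
    have hwn : ‖w‖ = r := by simpa using hw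
    have hw1 : ‖w‖ < 1 := by rw [hwn]; exact hr1
    have hw0 : w ≠ 0 := by
      intro h; rw [h, norm_zero] at hwn; exact hr0.ne hwn
    have h1w : (1 : ℂ) - w ≠ 0 := by
      intro h
      have : w = 1 := by linear_combination -h
      rw [this, norm_one] at hw1; exact lt_irrefl _ hw1
    have h1pw : (1 : ℂ) + w ≠ 0 := by
      intro h
      have : w = -1 := by linear_combination h
      rw [this, norm_neg, norm_one] at hw1; exact lt_irrefl _ hw1
    have hg1 : ∑' k : ℕ, w ^ k = (1 - w)⁻¹ := tsum_geometric_of_norm_lt_one hw1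
    have hg2 : ∑' k : ℕ, (-w) ^ k = (1 + w)⁻¹ := by
      have := tsum_geometric_of_norm_lt_one (show ‖-w‖ < 1 by rwa [norm_neg])
      simpa [sub_neg_eq_add] using this
    have hsum1 : Summable fun k : ℕ => w ^ k := summable_geometric_of_norm_lt_one hw1
    have hsum2 : Summable fun k : ℕ => (-w) ^ k :=
      summable_geometric_of_norm_lt_one (show ‖-w‖ < 1 by rwa [norm_neg])
    have hδ : (1 / 2 : ℂ) * (1 / (1 - w) + c / (1 + w)) = ∑' k : ℕ, ε k * w ^ k := by
      have step : (∑' k : ℕ, ε k * w ^ k)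
          = ∑' k : ℕ, (1 / 2 : ℂ) * (w ^ k + c * (-w) ^ k) := by
        refine tsum_congr fun k => ?_
        rw [hεdef]; simp only []
        rw [neg_pow]
        ring
      rw [step, tsum_mul_left, Summable.tsum_add hsum1 (hsum2.mul_left c), hg1, tsum_mul_left, hg2]
      ring
    have hSg : Summable fun n => ‖g n * w ^ n‖ := by
      simp only [norm_mul, norm_pow, hwn]; exact hconv
    have hSε : Summable fun k => ‖ε k * w ^ k‖ := by
      refine Summable.of_nonneg_of_le (fun _ => norm_nonneg _) (fun k => ?_)
        (summable_geometric_of_lt_one hr0.le hr1)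
      rw [norm_mul, norm_pow, hwn]
      exact mul_le_of_le_one_left (by positivity) (hεnorm k)
    simp only []
    rw [hδ, tsum_mul_tsum_eq_tsum_sum_antidiagonal_of_summable_norm hSg hSε,
      tsum_congr (fun j => hprod w j), ← tsum_div_const]
    refine tsum_congr fun j => ?_
    rw [show ((j : ℤ) - ((N : ℤ) + 1)) = (j : ℤ) - (((N + 1 : ℕ) : ℤ)) by push_cast; ring,
      zpow_sub₀ hw0, zpow_natCast, zpow_natCast, mul_div_assoc]
  rw [circleIntegral.integral_congr hr0.le hEqOn, circleIntegral_tsum_zpow a hr0 N ha]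
  have h2pi : (2 * (Real.pi : ℂ) * Complex.I) ≠ 0 := by
    simp [Real.pi_ne_zero, Complex.I_ne_zero]
  rw [one_div, inv_mul_cancel_left₀ h2pi]
  -- now compute a N
  rw [hadef]; simp only []
  rw [Finset.Nat.sum_antidiagonal_eq_sum_range_succ_mk, Finset.sum_filter]
  refine Finset.sum_congr rfl fun n hn => ?_
  have hnN : n ≤ N := Nat.lt_succ_iff.mp (Finset.mem_range.mp hn)
  have hkey : c * (-1 : ℂ) ^ (N - n) = if ((n : ℤ) % 2 = m % 2) then 1 else -1 := by
    rw [hc, ← zpow_natCast (-1 : ℂ) (N - n), ← zpow_add₀ (by norm_num : (-1 : ℂ) ≠ 0)]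
    have hcast : ((N - n : ℕ) : ℤ) = (N : ℤ) - n := by omega
    rw [hcast]
    split_ifs with h
    · have : Even ((N : ℤ) - m + ((N : ℤ) - n)) := by rw [Int.even_iff]; omega
      exact this.neg_one_zpow
    · have : Odd ((N : ℤ) - m + ((N : ℤ) - n)) := by rw [Int.odd_iff]; omega
      exact this.neg_one_zpow
  rw [hεdef]; simp only []
  rw [hkey]
  split_ifs with h
  · ring
  · ring
end

section
/- Let q be a prime power, a > 0 with a = O(1), θ ∈ [0, 2π], and set θ̄ = min{θ, 2π - θ}. Then Σ_{n=1}^{g} cos(nθ)/(n q^{an}) = log min{1/a, min{g, 1/θ̄}} + O(1), where the implied constant is absolute (uniform in a, θ, g). -/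
set_option maxHeartbeats 1000000

open Real

private lemma one_sub_cos_eq (t : ℝ) : 1 - Real.cos t = 2 * Real.sin (t/2)^2 := by
  have h : Real.cos (2 * (t/2)) = Real.cos (t/2)^2 - Real.sin (t/2)^2 := Real.cos_two_mul' _
  have h2 : Real.cos (t/2)^2 = 1 - Real.sin (t/2)^2 := Real.cos_sq' _
  have ht : 2 * (t/2) = t := by ring
  rw [ht] at h
  rw [h, h2]; ring

private lemma exp_ratio {x X : ℝ} (hx : 0 < x) (hX : x ≤ X) :
    (1 - Real.exp (-X)) / X ≤ (1 - Real.exp (-x)) / x := by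
  have hX0 : 0 < X := lt_of_lt_of_le hx hX
  have hs1 : 0 ≤ 1 - x / X := by
    have : x / X ≤ 1 := (div_le_one hX0).mpr hX
    linarith
  have hs2 : 0 ≤ x / X := le_of_lt (div_pos hx hX0)
  have key := convexOn_exp.2 (Set.mem_univ (0:ℝ)) (Set.mem_univ (-X)) hs1 hs2 (by ring)
  simp only [smul_eq_mul, mul_zero, Real.exp_zero, mul_one, zero_add] at key
  have hsx : x / X * (-X) = -x := by field_simp
  rw [hsx] at key
  -- key : Real.exp (-x) ≤ (1 - x/X) + x/X * Real.exp (-X)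
  have key2 := mul_le_mul_of_nonneg_left key hX0.le
  have hXne : X ≠ 0 := hX0.ne'
  have hexp : X * (1 - x / X + x / X * Real.exp (-X)) = X - x + x * Real.exp (-X) := by
    field_simp
  rw [hexp] at key2
  rw [div_le_div_iff₀ hX0 hx]
  nlinarith [key2]

private lemma abel_bound (z : ℂ) (hz : ‖z‖ ≤ 1) (hz1 : z ≠ 1)
    (d : ℕ → ℝ) (hd0 : ∀ i, 0 ≤ d i) (hdm : ∀ i, d (i+1) ≤ d i) (M L : ℕ) :
    ‖∑ i ∈ Finset.range L, (d i : ℂ) * z ^ (M + i)‖ ≤ 2 * d 0 / ‖1 - z‖ := by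
  have hz0 : 0 < ‖1 - z‖ := by
    rw [norm_pos_iff]
    exact sub_ne_zero.mpr (fun h => hz1 h.symm)
  set K := 2 / ‖1 - z‖ with hK
  have hK0 : 0 ≤ K := by positivity
  have hanti : Antitone d := antitone_nat_of_succ_le hdm
  have hG : ∀ k : ℕ, ‖∑ j ∈ Finset.range k, z ^ (M + j)‖ ≤ K := by
    intro k
    have he : ∑ j ∈ Finset.range k, z ^ (M + j) = z ^ M * ((z ^ k - 1) / (z - 1)) := by
      rw [← geom_sum_eq hz1 k, Finset.mul_sum]
      exact Finset.sum_congr rfl fun j _ => pow_add z M j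
    rw [he, norm_mul, norm_div]
    have h1 : ‖z ^ M‖ ≤ 1 := by rw [norm_pow]; exact pow_le_one₀ (norm_nonneg z) hz
    have h2 : ‖z ^ k - 1‖ ≤ 2 := by
      calc ‖z ^ k - 1‖ ≤ ‖z ^ k‖ + ‖(1:ℂ)‖ := norm_sub_le _ _
        _ ≤ 1 + 1 := by
            rw [norm_pow, norm_one]
            exact add_le_add (pow_le_one₀ (norm_nonneg z) hz) le_rfl
        _ = 2 := by norm_num
    have h3 : ‖z - 1‖ = ‖1 - z‖ := by rw [← norm_neg]; ring_nf
    rw [h3, hK]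
    calc ‖z ^ M‖ * (‖z ^ k - 1‖ / ‖1 - z‖) ≤ 1 * (2 / ‖1 - z‖) := by gcongr
      _ = 2 / ‖1 - z‖ := one_mul _
  rcases Nat.eq_zero_or_pos L with hL | hL
  · rw [hL]
    simp only [Finset.range_zero, Finset.sum_empty, norm_zero]
    exact div_nonneg (by nlinarith [hd0 0]) (norm_nonneg _)
  have hparts := Finset.sum_range_by_parts (fun i => ((d i : ℝ) : ℂ)) (fun i => z ^ (M + i)) L
  simp only [smul_eq_mul] at hparts
  rw [hparts]
  have hb1 : ‖((d (L-1) : ℝ) : ℂ) * ∑ i ∈ Finset.range L, z ^ (M + i)‖ ≤ d (L-1) * K := by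
    rw [norm_mul, Complex.norm_real, Real.norm_eq_abs, abs_of_nonneg (hd0 _)]
    exact mul_le_mul_of_nonneg_left (hG L) (hd0 _)
  have hb2 : ‖∑ i ∈ Finset.range (L-1), (((d (i+1) : ℝ) : ℂ) - ((d i : ℝ) : ℂ)) *
      ∑ j ∈ Finset.range (i+1), z ^ (M + j)‖ ≤ (d 0 - d (L-1)) * K := by
    calc ‖∑ i ∈ Finset.range (L-1), (((d (i+1) : ℝ) : ℂ) - ((d i : ℝ) : ℂ)) *
        ∑ j ∈ Finset.range (i+1), z ^ (M + j)‖
        ≤ ∑ i ∈ Finset.range (L-1), ‖(((d (i+1) : ℝ) : ℂ) - ((d i : ℝ) : ℂ)) *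
          ∑ j ∈ Finset.range (i+1), z ^ (M + j)‖ := norm_sum_le _ _
      _ ≤ ∑ i ∈ Finset.range (L-1), (d i - d (i+1)) * K := by
          apply Finset.sum_le_sum
          intro i _
          rw [norm_mul, ← Complex.ofReal_sub, Complex.norm_real, Real.norm_eq_abs,
            abs_of_nonpos (by linarith [hdm i])]
          have : -(d (i+1) - d i) = d i - d (i+1) := by ring
          rw [this]
          exact mul_le_mul_of_nonneg_left (hG (i+1)) (by linarith [hdm i])
      _ = (d 0 - d (L-1)) * K := by
          rw [← Finset.sum_mul, Finset.sum_range_sub' d (L-1)]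
  calc ‖((d (L-1) : ℝ) : ℂ) * ∑ i ∈ Finset.range L, z ^ (M + i) -
        ∑ i ∈ Finset.range (L-1), (((d (i+1) : ℝ) : ℂ) - ((d i : ℝ) : ℂ)) *
          ∑ j ∈ Finset.range (i+1), z ^ (M + j)‖
      ≤ d (L-1) * K + (d 0 - d (L-1)) * K := le_trans (norm_sub_le _ _) (add_le_add hb1 hb2)
    _ = d 0 * K := by ring
    _ = 2 * d 0 / ‖1 - z‖ := by rw [hK]; ring

private lemma geom_tail {r : ℝ} (h0 : 0 ≤ r) (h1 : r < 1) (N g : ℕ) :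
    ∑ n ∈ Finset.Ioc N g, r ^ n ≤ r ^ (N+1) / (1 - r) := by
  have h1r : 0 < 1 - r := by linarith
  rw [← Finset.Ico_add_one_add_one_eq_Ioc, Finset.sum_Ico_eq_sum_range]
  have heq : ∀ k : ℕ, r ^ (N + 1 + k) = r ^ (N+1) * r ^ k := fun k => pow_add r (N+1) k
  calc ∑ k ∈ Finset.range (g + 1 - (N + 1)), r ^ (N + 1 + k)
      = r ^ (N+1) * ∑ k ∈ Finset.range (g + 1 - (N + 1)), r ^ k := by
        rw [Finset.mul_sum]; exact Finset.sum_congr rfl fun k _ => heq k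
    _ ≤ r ^ (N+1) * (1 - r)⁻¹ := by
        apply mul_le_mul_of_nonneg_left _ (pow_nonneg h0 _)
        rw [geom_sum_eq h1.ne]
        have : (r ^ (g + 1 - (N + 1)) - 1) / (r - 1) = (1 - r ^ (g + 1 - (N + 1))) / (1 - r) := by
          rw [← neg_sub 1 (r ^ (g + 1 - (N + 1))), ← neg_sub 1 r, neg_div_neg_eq]
        rw [this, inv_eq_one_div]
        gcongr
        nlinarith [pow_nonneg h0 (g + 1 - (N + 1))]
    _ = r ^ (N+1) / (1 - r) := by rw [div_eq_mul_inv]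


private lemma cos_exp_term_bound (u v : ℝ) (hu : 0 ≤ u) :
    |Real.cos v * Real.exp (-u) - 1| ≤ u + v^2/2 := by
  have h2 : 1 - Real.exp (-u) ≤ u := by linarith [Real.add_one_le_exp (-u)]
  have h3 : 1 - Real.cos v ≤ v^2/2 := by linarith [Real.one_sub_sq_div_two_le_cos (x := v)]
  have he1 : Real.exp (-u) ≤ 1 := Real.exp_le_one_iff.mpr (by linarith)
  have he0 : (0:ℝ) < Real.exp (-u) := Real.exp_pos _
  have hc1 : Real.cos v ≤ 1 := Real.cos_le_one _
  have hcn1 : -1 ≤ Real.cos v := Real.neg_one_le_cos _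
  rw [abs_le]; constructor
  · nlinarith
  · nlinarith

private lemma head_total {n b t L : ℝ} (hn : 0 ≤ n) (hb : 0 ≤ b) (ht : 0 ≤ t)
    (h1 : n * b ≤ L) (h2 : n * t ≤ 1) : n * (b + n * t^2/2) ≤ L + 1/2 := by
  nlinarith [mul_nonneg hn ht]

private lemma one_sub_exp_lower {b X t : ℝ} (hb : 0 < b) (hbX : b ≤ X) (ht0 : 0 < t)
    (htpi : t ≤ Real.pi) :
    2/Real.pi * Real.exp (-(X/2)) * t ≤ ‖1 - Complex.exp ⟨-b, t⟩‖ := by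
  have hpi : (0:ℝ) < Real.pi := Real.pi_pos
  set w : ℂ := ⟨-b, t⟩ with hw
  have hwre : w.re = -b := rfl
  have hwim : w.im = t := rfl
  have hy0 : (0:ℝ) ≤ 2/Real.pi * Real.exp (-(X/2)) * t := by positivity
  rw [Complex.norm_def,
    Real.le_sqrt hy0 (Complex.normSq_nonneg _)]
  have h1re : (1 - Complex.exp w).re = 1 - Real.exp (-b) * Real.cos t := by
    rw [Complex.sub_re, Complex.one_re, Complex.exp_re, hwre, hwim]
  have h1im : (1 - Complex.exp w).im = -(Real.exp (-b) * Real.sin t) := by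
    rw [Complex.sub_im, Complex.one_im, Complex.exp_im, hwre, hwim]; ring
  rw [Complex.normSq_apply, h1re, h1im]
  have hsc := Real.sin_sq_add_cos_sq t
  have hcos2 : 1 - Real.cos t = 2 * Real.sin (t/2)^2 := one_sub_cos_eq t
  have hsin : t/Real.pi ≤ Real.sin (t/2) := by
    have hms := Real.mul_le_sin (x := t/2) (by linarith) (by linarith)
    calc t/Real.pi = 2/Real.pi * (t/2) := by ring
      _ ≤ Real.sin (t/2) := hms
  have hee : Real.exp (-X) ≤ Real.exp (-b) := Real.exp_le_exp.mpr (by linarith)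
  have hsqX : Real.exp (-(X/2))^2 = Real.exp (-X) := by
    rw [sq, ← Real.exp_add]; congr 1; ring
  have hyX : (2/Real.pi * Real.exp (-(X/2)) * t)^2
      = 4/Real.pi^2 * Real.exp (-X) * t^2 := by
    calc (2/Real.pi * Real.exp (-(X/2)) * t)^2
        = (2/Real.pi)^2 * Real.exp (-(X/2))^2 * t^2 := by ring
      _ = 4/Real.pi^2 * Real.exp (-X) * t^2 := by rw [hsqX]; ring
  have hS0 : 0 ≤ Real.sin (t/2) := le_trans (by positivity) hsin
  have hS2 : (t/Real.pi)^2 ≤ Real.sin (t/2)^2 := by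
    nlinarith [mul_self_le_mul_self (div_pos ht0 hpi).le hsin]
  have h1c : 0 ≤ 1 - Real.cos t := by nlinarith [Real.cos_le_one t]
  have step1 : 2 * Real.exp (-b) * (1 - Real.cos t)
      ≤ (1 - Real.exp (-b) * Real.cos t) * (1 - Real.exp (-b) * Real.cos t)
        + (-(Real.exp (-b) * Real.sin t)) * (-(Real.exp (-b) * Real.sin t)) := by
    nlinarith [hsc, sq_nonneg (1 - Real.exp (-b))]
  have step2 : 4/Real.pi^2 * Real.exp (-X) * t^2
      ≤ 2 * Real.exp (-b) * (1 - Real.cos t) := by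
    rw [hcos2]
    have hts : t ≤ Real.pi * Real.sin (t/2) := by
      rw [div_le_iff₀ hpi] at hsin; linarith
    have ht2 : t^2 ≤ Real.pi^2 * Real.sin (t/2)^2 := by
      nlinarith [mul_self_le_mul_self ht0.le hts]
    have h6 : Real.exp (-X) * t^2 ≤ Real.exp (-b) * (Real.pi^2 * Real.sin (t/2)^2) :=
      mul_le_mul hee ht2 (sq_nonneg t) (Real.exp_pos _).le
    have hpi2 : (0:ℝ) < Real.pi^2 := by positivity
    calc 4/Real.pi^2 * Real.exp (-X) * t^2 = 4 * (Real.exp (-X) * t^2) / Real.pi^2 := by ring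
      _ ≤ 4 * (Real.exp (-b) * (Real.pi^2 * Real.sin (t/2)^2)) / Real.pi^2 := by gcongr
      _ = 2 * Real.exp (-b) * (2 * Real.sin (t/2)^2) := by field_simp; ring
  rw [hyX]
  linarith [step1, step2]


/-- For `q ≥ 2`, `a > 0` bounded, `θ ∈ [0, 2π]` and `θ̄ = min{θ, 2π - θ}`,
`∑_{n=1}^{g} cos(nθ)/(n q^{an}) = log min{1/a, min{g, 1/θ̄}} + O(1)`, with the
implied constant uniform in `a`, `θ`, `g` (with the convention that `1/θ̄ = ∞`,
i.e. the inner minimum is `g`, when `θ̄ = 0`). -/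
theorem cos_damped_sum_asymptotic (q : ℕ) (hq : 2 ≤ q) (A : ℝ) (hA : 0 < A) :
    ∃ C : ℝ, ∀ (g : ℕ) (a θ : ℝ), 1 ≤ g → 0 < a → a ≤ A → θ ∈ Set.Icc 0 (2 * π) →
      |(∑ n ∈ Finset.Icc 1 g, Real.cos (n * θ) / ((n : ℝ) * (q : ℝ) ^ (a * n)))
        - Real.log (min (1 / a)
            (if min θ (2 * π - θ) = 0 then (g : ℝ)
             else min (g : ℝ) (1 / min θ (2 * π - θ))))| ≤ C := by
  have hq1 : (1:ℝ) < q := by exact_mod_cast Nat.lt_of_lt_of_le Nat.one_lt_two hq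
  have hq0 : (0:ℝ) < q := lt_trans one_pos hq1
  have hlogq : 0 < Real.log q := Real.log_pos hq1
  have hπ : 0 < π := Real.pi_pos
  have hπ3 : 3 < π := Real.pi_gt_three
  refine ⟨(Real.log q + 1/2) + (1 + Real.log (max A π)) +
    (A / (1 - Real.exp (-(A * Real.log q))) + π * Real.exp (A * Real.log q / 2)), ?_⟩
  intro g a θ hg ha haA hθ
  obtain ⟨hθ0, hθ2π⟩ := hθ
  set t := min θ (2 * π - θ) with hts
  have ht0 : 0 ≤ t := le_min hθ0 (by linarith)
  have htπ : t ≤ π := by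
    rcases le_total θ π with h | h
    · exact le_trans (min_le_left _ _) h
    · exact le_trans (min_le_right _ _) (by linarith)
  set b := a * Real.log q with hbs
  have hb0 : 0 < b := mul_pos ha hlogq
  set X := A * Real.log q with hXs
  have hX0 : 0 < X := mul_pos hA hlogq
  have hbX : b ≤ X := mul_le_mul_of_nonneg_right haA hlogq.le
  have heX1 : Real.exp (-X) < 1 := Real.exp_lt_one_iff.mpr (by linarith)
  -- rewrite the summand
  have hcos : ∀ n : ℕ, Real.cos (n * θ) = Real.cos (n * t) := by
    intro n
    rcases min_choice θ (2 * π - θ) with h | h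
    · rw [hts, h]
    · rw [hts, h]
      have he : (n:ℝ) * (2 * π - θ) = (n:ℝ) * (2 * π) - n * θ := by ring
      have hsin : Real.sin ((n:ℝ) * (2 * π)) = 0 := by
        have : (n:ℝ) * (2 * π) = ((2 * n : ℕ) : ℝ) * π := by push_cast; ring
        rw [this, Real.sin_nat_mul_pi]
      rw [he, Real.cos_sub, Real.cos_nat_mul_two_pi, hsin]
      ring
  set f : ℕ → ℝ := fun n => Real.cos (n * t) * Real.exp (-(b * n)) / n with hf
  have hsum1 : (∑ n ∈ Finset.Icc 1 g, Real.cos (n * θ) / ((n : ℝ) * (q : ℝ) ^ (a * n)))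
      = ∑ n ∈ Finset.Icc 1 g, f n := by
    apply Finset.sum_congr rfl
    intro n hn
    have hrpow : (q:ℝ) ^ (a * (n:ℝ)) = Real.exp (b * n) := by
      rw [Real.rpow_def_of_pos hq0, hbs]
      ring_nf
    rw [hcos n, hrpow, hf]
    simp only
    rw [Real.exp_neg]
    ring
  rw [hsum1]
  -- basic quantities
  have hg1 : (1:ℝ) ≤ (g:ℝ) := by exact_mod_cast hg
  set Gv := if t = 0 then (g:ℝ) else min (g:ℝ) (1/t) with hGs
  have hGg : Gv ≤ (g:ℝ) := by
    rw [hGs]; split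
    · exact le_rfl
    · exact min_le_left _ _
  have hGlow : 1/π ≤ Gv := by
    have h1π : 1/π ≤ 1 := by rw [div_le_one hπ]; linarith
    rw [hGs]; split
    · linarith
    · rename_i h
      have htpos : 0 < t := lt_of_le_of_ne ht0 (Ne.symm h)
      exact le_min (by linarith) (one_div_le_one_div_of_le htpos htπ)
  have hGpos : 0 < Gv := lt_of_lt_of_le (by positivity) hGlow
  set m := min (1/a) Gv with hms
  have hm0 : 0 < m := lt_min (by positivity) hGpos
  have hmlow : min (1/A) (1/π) ≤ m := by
    apply min_le_min _ hGlow
    exact one_div_le_one_div_of_le ha haA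
  set N := ⌊m⌋₊ with hN
  have hNm : (N:ℝ) ≤ m := Nat.floor_le hm0.le
  have hmN : m < (N:ℝ) + 1 := Nat.lt_floor_add_one m
  have hNg : N ≤ g := by
    have : (N:ℝ) ≤ (g:ℝ) := le_trans hNm (le_trans (min_le_right _ _) hGg)
    exact_mod_cast this
  have hNa : (N:ℝ) * a ≤ 1 := by
    have : (N:ℝ) ≤ 1/a := le_trans hNm (min_le_left _ _)
    calc (N:ℝ) * a ≤ (1/a) * a := mul_le_mul_of_nonneg_right this ha.le
      _ = 1 := by field_simp
  have hNt : (N:ℝ) * t ≤ 1 := by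
    by_cases h : t = 0
    · rw [h]; norm_num
    · have htpos : 0 < t := lt_of_le_of_ne ht0 (Ne.symm h)
      have h1 : Gv ≤ 1/t := by rw [hGs, if_neg h]; exact min_le_right _ _
      have : (N:ℝ) ≤ 1/t := le_trans hNm (le_trans (min_le_right _ _) h1)
      calc (N:ℝ) * t ≤ (1/t) * t := mul_le_mul_of_nonneg_right this ht0
        _ = 1 := by field_simp
  -- split the sum
  have hsplit : ∑ n ∈ Finset.Icc 1 g, f n
      = (∑ n ∈ Finset.Ioc 0 N, f n) + ∑ n ∈ Finset.Ioc N g, f n := by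
    rw [show Finset.Icc 1 g = Finset.Ioc 0 g from Finset.Icc_add_one_left_eq_Ioc 0 g,
      ← Finset.sum_Ioc_consecutive f (Nat.zero_le N) hNg]
  rw [hsplit]
  -- head estimate
  have hH1 : |(∑ n ∈ Finset.Ioc 0 N, f n) - ∑ n ∈ Finset.Ioc 0 N, ((n:ℝ))⁻¹|
      ≤ Real.log q + 1/2 := by
    have hptw : ∀ n ∈ Finset.Ioc 0 N, |f n - ((n:ℝ))⁻¹| ≤ b + (N:ℝ) * t^2 / 2 := by
      intro n hn
      obtain ⟨hn0, hnN⟩ := Finset.mem_Ioc.mp hn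
      have hn1 : (1:ℝ) ≤ (n:ℝ) := by exact_mod_cast hn0
      have hnN' : (n:ℝ) ≤ (N:ℝ) := by exact_mod_cast hnN
      have hnpos : (0:ℝ) < n := by linarith
      have heq : f n - ((n:ℝ))⁻¹ = (Real.cos (n * t) * Real.exp (-(b * n)) - 1) / n := by
        simp only [hf]
        rw [sub_div, one_div]
      have habs : |Real.cos ((n:ℝ) * t) * Real.exp (-(b * n)) - 1|
          ≤ b * n + ((n:ℝ) * t)^2 / 2 := cos_exp_term_bound (b * n) ((n:ℝ) * t) (by positivity)
      calc |f n - ((n:ℝ))⁻¹| = |Real.cos ((n:ℝ) * t) * Real.exp (-(b * n)) - 1| / n := by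
            rw [heq, abs_div, abs_of_pos hnpos]
        _ ≤ (b * n + ((n:ℝ) * t)^2 / 2) / n := by gcongr
        _ = b + (n:ℝ) * t^2 / 2 := by field_simp
        _ ≤ b + (N:ℝ) * t^2 / 2 := by
            linarith [mul_le_mul_of_nonneg_right hnN' (sq_nonneg t)]
    rw [← Finset.sum_sub_distrib]
    refine le_trans (Finset.abs_sum_le_sum_abs _ _) ?_
    refine le_trans (Finset.sum_le_sum hptw) ?_
    rw [Finset.sum_const, Nat.card_Ioc, Nat.sub_zero, nsmul_eq_mul]
    have hNb : (N:ℝ) * b ≤ Real.log q := by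
      have h := mul_le_mul_of_nonneg_right hNa hlogq.le
      rw [hbs]; linarith [h]
    exact head_total (Nat.cast_nonneg N) hb0.le ht0 hNb hNt
  -- harmonic estimate
  have hH2 : |(∑ n ∈ Finset.Ioc 0 N, ((n:ℝ))⁻¹) - Real.log m| ≤ 1 + Real.log (max A π) := by
    have hIcc : Finset.Ioc 0 N = Finset.Icc 1 N := (Finset.Icc_add_one_left_eq_Ioc 0 N).symm
    have hHsum : ∑ n ∈ Finset.Ioc 0 N, ((n:ℝ))⁻¹ = ((harmonic N : ℚ) : ℝ) := by
      rw [hIcc, harmonic_eq_sum_Icc]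
      push_cast
      ring
    have hlmax : 0 ≤ Real.log (max A π) :=
      Real.log_nonneg (le_trans (by linarith) (le_max_right A π))
    rcases Nat.eq_zero_or_pos N with hN0 | hNpos
    · rw [hN0]
      simp only [Finset.Ioc_self, Finset.sum_empty, zero_sub, abs_neg]
      have hm1 : m < 1 := by
        have h := hmN; rw [hN0] at h; norm_num at h; exact h
      have hlm : Real.log m ≤ 0 := Real.log_nonpos hm0.le hm1.le
      rw [abs_of_nonpos hlm]
      have h1m : 1/(max A π) ≤ m := by
        refine le_trans (le_min ?_ ?_) hmlow
        · exact one_div_le_one_div_of_le hA (le_max_left A π)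
        · exact one_div_le_one_div_of_le hπ (le_max_right A π)
      have hlog1 := Real.log_le_log (by positivity) h1m
      rw [one_div, Real.log_inv] at hlog1
      linarith
    · have hN1' : (1:ℝ) ≤ (N:ℝ) := by exact_mod_cast hNpos
      have hup := harmonic_le_one_add_log N
      have hlow := log_add_one_le_harmonic N
      push_cast at hlow
      have h1 : Real.log m ≤ Real.log ((N:ℝ)+1) := Real.log_le_log hm0 hmN.le
      have h2 : Real.log (N:ℝ) ≤ Real.log m := Real.log_le_log (by linarith) hNm
      rw [hHsum, abs_le]
      constructor
      · linarith
      · linarith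
  -- tail estimate
  have hT : |∑ n ∈ Finset.Ioc N g, f n|
      ≤ A / (1 - Real.exp (-X)) + π * Real.exp (X / 2) := by
    have hrhs1 : (0:ℝ) ≤ A / (1 - Real.exp (-X)) := by
      apply div_nonneg hA.le; linarith
    have hrhs2 : (0:ℝ) ≤ π * Real.exp (X / 2) := by positivity
    rcases eq_or_lt_of_le hNg with hNgeq | hNglt
    · rw [hNgeq, Finset.Ioc_self]
      simp only [Finset.sum_empty, abs_zero]
      linarith
    · by_cases hcase : 1/a ≤ Gv
      · -- exponential tail bound
        have hmeq : m = 1/a := by rw [hms]; exact min_eq_left hcase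
        have hNa1 : 1/a < (N:ℝ) + 1 := by rw [← hmeq]; exact hmN
        have hr0 : (0:ℝ) < Real.exp (-b) := Real.exp_pos _
        have hr1 : Real.exp (-b) < 1 := Real.exp_lt_one_iff.mpr (by linarith)
        have h1b : (0:ℝ) < 1 - Real.exp (-b) := by linarith
        have h1X : (0:ℝ) < 1 - Real.exp (-X) := by linarith
        have hinva : ((N:ℝ)+1)⁻¹ ≤ a := by
          have hh : 1 < ((N:ℝ)+1) * a := by rw [div_lt_iff₀ ha] at hNa1; exact hNa1
          have hp : (0:ℝ) < (N:ℝ)+1 := by positivity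
          rw [inv_eq_one_div, div_le_iff₀ hp]
          linarith [hh]
        have hptw : ∀ n ∈ Finset.Ioc N g, |f n| ≤ Real.exp (-b) ^ n * ((N:ℝ)+1)⁻¹ := by
          intro n hn
          obtain ⟨hn1, hn2⟩ := Finset.mem_Ioc.mp hn
          have hn1' : (N:ℝ) + 1 ≤ (n:ℝ) := by exact_mod_cast hn1
          have hnpos : (0:ℝ) < n := by
            have : (0:ℝ) ≤ (N:ℝ) := Nat.cast_nonneg N
            linarith
          have hexpn : Real.exp (-(b * n)) = Real.exp (-b) ^ n := by
            rw [← Real.exp_nat_mul]; congr 1; ring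
          rw [hf]; simp only
          rw [abs_div, abs_of_pos hnpos, abs_mul, Real.abs_exp, hexpn]
          calc |Real.cos ((n:ℝ) * t)| * Real.exp (-b) ^ n / n
              ≤ 1 * Real.exp (-b) ^ n / n := by
                gcongr
                exact Real.abs_cos_le_one _
            _ = Real.exp (-b) ^ n * ((n:ℝ))⁻¹ := by ring
            _ ≤ Real.exp (-b) ^ n * ((N:ℝ)+1)⁻¹ := by
                gcongr
        have key := exp_ratio hb0 hbX
        rw [div_le_div_iff₀ hX0 hb0] at key
        have key2 : a * (1 - Real.exp (-X)) ≤ A * (1 - Real.exp (-b)) := by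
          have hb' : (1 - Real.exp (-X)) * b = ((1 - Real.exp (-X)) * a) * Real.log q := by
            rw [hbs]; ring
          have hX' : (1 - Real.exp (-b)) * X = ((1 - Real.exp (-b)) * A) * Real.log q := by
            rw [hXs]; ring
          rw [hb', hX'] at key
          have := le_of_mul_le_mul_right key hlogq
          linarith
        calc |∑ n ∈ Finset.Ioc N g, f n|
            ≤ ∑ n ∈ Finset.Ioc N g, |f n| := Finset.abs_sum_le_sum_abs _ _
          _ ≤ ∑ n ∈ Finset.Ioc N g, Real.exp (-b) ^ n * ((N:ℝ)+1)⁻¹ := Finset.sum_le_sum hptw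
          _ = (∑ n ∈ Finset.Ioc N g, Real.exp (-b) ^ n) * ((N:ℝ)+1)⁻¹ := by
              rw [← Finset.sum_mul]
          _ ≤ (Real.exp (-b) ^ (N+1) / (1 - Real.exp (-b))) * ((N:ℝ)+1)⁻¹ := by
              exact mul_le_mul_of_nonneg_right (geom_tail hr0.le hr1 N g) (by positivity)
          _ ≤ (1 / (1 - Real.exp (-b))) * a := by
              apply mul_le_mul ?_ hinva (by positivity) (by positivity)
              gcongr
              exact pow_le_one₀ hr0.le hr1.le
          _ ≤ A / (1 - Real.exp (-X)) := by
              have heq2 : (1 / (1 - Real.exp (-b))) * a = a / (1 - Real.exp (-b)) := by ring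
              rw [heq2, div_le_div_iff₀ h1b h1X]
              linarith [key2]
          _ ≤ A / (1 - Real.exp (-X)) + π * Real.exp (X/2) := by linarith
      · -- oscillation (Abel) bound
        push_neg at hcase
        have hmeq : m = Gv := by rw [hms]; exact min_eq_right hcase.le
        have htne : t ≠ 0 := by
          intro h
          have hGveq : Gv = (g:ℝ) := by rw [hGs, if_pos h]
          have hNgg : N = g := by rw [hN, hmeq, hGveq, Nat.floor_natCast]
          exact absurd hNgg hNglt.ne
        have htpos : 0 < t := lt_of_le_of_ne ht0 (Ne.symm htne)
        have hGveq : Gv = min (g:ℝ) (1/t) := by rw [hGs, if_neg htne]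
        have hmt : m = 1/t := by
          rcases le_total (g:ℝ) (1/t) with h | h
          · exfalso
            have hmg : m = (g:ℝ) := by rw [hmeq, hGveq, min_eq_left h]
            have hNgg : N = g := by rw [hN, hmg, Nat.floor_natCast]
            exact absurd hNgg hNglt.ne
          · rw [hmeq, hGveq, min_eq_right h]
        have hNt1 : 1 ≤ ((N:ℝ) + 1) * t := by
          have h1 : 1/t < (N:ℝ) + 1 := by rw [← hmt]; exact hmN
          rw [div_lt_iff₀ htpos] at h1
          linarith
        set w : ℂ := ⟨-b, t⟩ with hw
        set z : ℂ := Complex.exp w with hz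
        have hwre : w.re = -b := rfl
        have hwim : w.im = t := rfl
        have hzabs : ‖z‖ = Real.exp (-b) := by rw [hz, Complex.norm_exp, hwre]
        have hrb1 : Real.exp (-b) < 1 := Real.exp_lt_one_iff.mpr (by linarith)
        have hznorm : ‖z‖ ≤ 1 := by
          rw [hzabs]; linarith
        have hz1 : z ≠ 1 := by
          intro h
          have habs1 : ‖z‖ = 1 := by rw [h]; simp
          rw [hzabs] at habs1
          linarith
        have hzn : ∀ n : ℕ, (z ^ n).re = Real.exp (-(b * n)) * Real.cos ((n:ℝ) * t) := by
          intro n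
          rw [hz, ← Complex.exp_nat_mul, Complex.exp_re]
          have hre : ((n:ℂ) * w).re = -(b * (n:ℝ)) := by
            rw [Complex.mul_re, hwre, hwim, Complex.natCast_re, Complex.natCast_im]; ring
          have him : ((n:ℂ) * w).im = (n:ℝ) * t := by
            rw [Complex.mul_im, hwre, hwim, Complex.natCast_re, Complex.natCast_im]; ring
          rw [hre, him]
        have hfre : ∀ n ∈ Finset.Ioc N g, f n = (((((n:ℝ))⁻¹ : ℝ) : ℂ) * z ^ n).re := by
          intro n _
          rw [Complex.re_ofReal_mul, hzn, hf]
          simp only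
          ring
        rw [Finset.sum_congr rfl hfre, ← Complex.re_sum]
        refine le_trans (Complex.abs_re_le_norm _) ?_
        rw [show Finset.Ioc N g = Finset.Ico (N+1) (g+1) from (Finset.Ico_add_one_add_one_eq_Ioc N g).symm,
          Finset.sum_Ico_eq_sum_range]
        have hconv : ∀ k, (((((N+1+k:ℕ):ℝ))⁻¹ : ℝ) : ℂ) * z ^ (N+1+k)
            = (((((N:ℝ)+1+(k:ℝ)))⁻¹ : ℝ) : ℂ) * z ^ (N+1+k) := by
          intro k
          norm_num [Nat.cast_add]
        rw [Finset.sum_congr rfl (fun k _ => hconv k)]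
        have hbnd := abel_bound z hznorm hz1 (fun i => (((N:ℝ)+1+(i:ℝ)))⁻¹)
          (fun i => by positivity)
          (fun i => by
            apply inv_anti₀ (by positivity)
            push_cast
            linarith)
          (N+1) (g+1-(N+1))
        simp only [Nat.cast_zero, add_zero] at hbnd
        refine le_trans hbnd ?_
        -- now bound 2 * (N+1)⁻¹ / ‖1 - z‖
        set y := 2/π * Real.exp (-(X/2)) * t with hy
        have hy0 : 0 < y := by positivity
        have hylez : y ≤ ‖1 - z‖ := by
          rw [hy, hz, hw]
          exact one_sub_exp_lower hb0 hbX htpos htπ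
        have hNpos1 : (0:ℝ) < (N:ℝ)+1 := by positivity
        calc 2 * ((N:ℝ)+1)⁻¹ / ‖1 - z‖ ≤ 2 * ((N:ℝ)+1)⁻¹ / y := by
              apply div_le_div_of_nonneg_left (by positivity) hy0 hylez
          _ ≤ π * Real.exp (X/2) := by
              rw [div_le_iff₀ hy0]
              have hex : Real.exp (X/2) * Real.exp (-(X/2)) = 1 := by
                rw [← Real.exp_add]
                simp
              have hrhs : π * Real.exp (X/2) * y = 2 * t := by
                have hstep : π * Real.exp (X/2) * (2/π * Real.exp (-(X/2)) * t)
                    = 2 * (Real.exp (X/2) * Real.exp (-(X/2))) * t := by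
                  field_simp
                rw [hy, hstep, hex]; ring
              rw [hrhs]
              have hinvt : ((N:ℝ)+1)⁻¹ ≤ t := by
                rw [inv_eq_one_div, div_le_iff₀ hNpos1]
                linarith [hNt1]
              linarith
          _ ≤ A / (1 - Real.exp (-X)) + π * Real.exp (X/2) := by linarith
  have habs : |((∑ n ∈ Finset.Ioc 0 N, f n) + ∑ n ∈ Finset.Ioc N g, f n) - Real.log m|
      ≤ |(∑ n ∈ Finset.Ioc 0 N, f n) - ∑ n ∈ Finset.Ioc 0 N, ((n:ℝ))⁻¹|
        + |(∑ n ∈ Finset.Ioc 0 N, ((n:ℝ))⁻¹) - Real.log m|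
        + |∑ n ∈ Finset.Ioc N g, f n| := by
    have : ((∑ n ∈ Finset.Ioc 0 N, f n) + ∑ n ∈ Finset.Ioc N g, f n) - Real.log m
        = ((∑ n ∈ Finset.Ioc 0 N, f n) - ∑ n ∈ Finset.Ioc 0 N, ((n:ℝ))⁻¹)
          + ((∑ n ∈ Finset.Ioc 0 N, ((n:ℝ))⁻¹) - Real.log m)
          + ∑ n ∈ Finset.Ioc N g, f n := by ring
    rw [this]
    exact le_trans (abs_add_le _ _) (add_le_add_left (abs_add_le _ _) _)
  linarith [habs, hH1, hH2, hT]
end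

section
/- Let g(n) be a sequence of complex numbers and r > 0 such that Σ_{n≥0} g(n) u^n converges absolutely for |u| ≤ r < 1. Then for any N ≥ 0, Σ_{n : 2n ≤ N} g(n) = (1/(2πi)) ∮_{|u|=r} (Σ_{n=0}^∞ g(n) u^{2n}) du/(u^{N+1}(1-u)). -/
open Complex Metric MeasureTheory

lemma one_sub_ne_zero_of_abs_le {r : ℝ} (hr1 : r < 1) {z : ℂ} (hz : ‖z‖ ≤ r) :
    (1 : ℂ) - z ≠ 0 := by
  intro h
  have hz1 : z = 1 := by linear_combination -h
  rw [hz1] at hz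
  simp at hz
  linarith

lemma circleIntegral_inv_one_sub (r : ℝ) (hr0 : 0 < r) (hr1 : r < 1) (k : ℕ) :
    (∮ z in C((0:ℂ), r), (1 - z)⁻¹ / z ^ (k + 1)) = 2 * Real.pi * Complex.I := by
  lift r to NNReal using hr0.le with R
  have hR0 : (0 : NNReal) < R := by exact_mod_cast hr0
  have hd : DifferentiableOn ℂ (fun z : ℂ => (1 - z)⁻¹) (closedBall (0:ℂ) R) := by
    refine DifferentiableOn.inv ?_ ?_
    · exact ((differentiable_const (1:ℂ)).sub differentiable_id).differentiableOn
    · intro z hz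
      exact one_sub_ne_zero_of_abs_le hr1 (by simpa using mem_closedBall_zero_iff.1 hz)
  have P1 := hd.hasFPowerSeriesOnBall hR0
  have P2 := hasFPowerSeriesOnBall_inv_one_sub ℂ ℂ
  have heq : cauchyPowerSeries (fun z : ℂ => (1 - z)⁻¹) 0 R =
      formalMultilinearSeries_geometric ℂ ℂ :=
    P1.hasFPowerSeriesAt.eq_formalMultilinearSeries P2.hasFPowerSeriesAt
  have h1 : (cauchyPowerSeries (fun z : ℂ => (1 - z)⁻¹) 0 R k fun _ => (1:ℂ)) = 1 := by
    rw [heq]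
    simp [formalMultilinearSeries_geometric]
  rw [cauchyPowerSeries_apply] at h1
  have h2 : (fun z : ℂ => ((1:ℂ) / (z - 0)) ^ k • (z - 0)⁻¹ • (1 - z)⁻¹)
      = fun z : ℂ => (1 - z)⁻¹ / z ^ (k + 1) := by
    funext z
    simp only [sub_zero, smul_eq_mul, one_div, div_eq_mul_inv, pow_succ, mul_inv, inv_pow]
    ring
  rw [h2] at h1
  have h2pi : (2 * (Real.pi:ℂ) * Complex.I) ≠ 0 := by
    simp [Real.pi_ne_zero, Complex.I_ne_zero]
  rw [smul_eq_mul, inv_mul_eq_one₀ h2pi] at h1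
  exact h1.symm

lemma circleIntegral_pow_mul_inv_one_sub (r : ℝ) (hr0 : 0 < r) (hr1 : r < 1) (m : ℕ) :
    (∮ z in C((0:ℂ), r), z ^ m * (1 - z)⁻¹) = 0 := by
  refine Complex.circleIntegral_eq_zero_of_differentiable_on_off_countable hr0.le
    Set.countable_empty ?_ ?_
  · apply ContinuousOn.mul (continuousOn_pow m)
    refine ContinuousOn.inv₀ (by fun_prop) ?_
    intro z hz
    exact one_sub_ne_zero_of_abs_le hr1 (by simpa using mem_closedBall_zero_iff.1 hz)
  · intro z hz
    refine (differentiableAt_pow m).mul (DifferentiableAt.inv (by fun_prop) ?_)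
    have : ‖z‖ ≤ r := le_of_lt (by simpa using mem_ball_zero_iff.1 hz.1)
    exact one_sub_ne_zero_of_abs_le hr1 this

/-- Perron-type even-index coefficient extraction: if `∑ g(n) uⁿ` converges
absolutely for `|u| ≤ r < 1`, then
`∑_{2n ≤ N} g(n) = (1/2πi) ∮_{|u|=r} (∑ g(n) u^{2n}) du/(u^{N+1}(1-u))`. -/
theorem perron_even (g : ℕ → ℂ) (r : ℝ) (hr0 : 0 < r) (hr1 : r < 1)
    (hconv : Summable fun n => ‖g n‖ * r ^ n) (N : ℕ) :
    ∑ n ∈ (Finset.range (N + 1)).filter (fun n => 2 * n ≤ N), g n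
      = (1 / (2 * Real.pi * Complex.I)) *
        ∮ u in C(0, r), (∑' n : ℕ, g n * u ^ (2 * n)) / (u ^ (N + 1) * (1 - u)) := by
  have h2pi : (2 * (Real.pi:ℂ) * Complex.I) ≠ 0 := by
    simp [Real.pi_ne_zero, Complex.I_ne_zero]
  -- summability facts
  have hg2 : Summable fun n => ‖g n‖ * r ^ (2 * n) := by
    refine Summable.of_nonneg_of_le (fun n => by positivity) (fun n => ?_) hconv
    exact mul_le_mul_of_nonneg_left
      (pow_le_pow_of_le_one hr0.le hr1.le (by omega)) (norm_nonneg _)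
  have hsumz : ∀ z : ℂ, ‖z‖ = r → Summable fun n => g n * z ^ (2 * n) := by
    intro z hz
    refine Summable.of_norm ?_
    simpa [norm_mul, norm_pow, hz] using hg2
  -- facts about points on the circle
  have hzr : ∀ θ : ℝ, ‖circleMap 0 r θ‖ = r := by
    intro θ; simp [norm_circleMap_zero, abs_of_pos hr0]
  have hz0 : ∀ θ : ℝ, circleMap 0 r θ ≠ 0 := fun θ => circleMap_ne_center hr0.ne'
  have h1z : ∀ θ : ℝ, (1 : ℂ) - circleMap 0 r θ ≠ 0 :=
    fun θ => one_sub_ne_zero_of_abs_le hr1 (hzr θ).le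
  -- interchange of sum and integral
  have key : HasSum (fun n => ∮ z in C((0:ℂ), r), g n * z ^ (2 * n) / (z ^ (N + 1) * (1 - z)))
      (∮ z in C((0:ℂ), r), (∑' n : ℕ, g n * z ^ (2 * n)) / (z ^ (N + 1) * (1 - z))) := by
    simp only [circleIntegral]
    refine intervalIntegral.hasSum_integral_of_dominated_convergence
      (bound := fun n _ => r * (‖g n‖ * r ^ (2 * n)) / (r ^ (N + 1) * (1 - r)))
      (fun n => ?_) (fun n => ?_) ?_ ?_ ?_
    · apply Continuous.aestronglyMeasurable
      simp only [deriv_circleMap]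
      refine ((continuous_circleMap 0 r).mul continuous_const).smul ?_
      refine Continuous.div (by fun_prop) (by fun_prop) ?_
      intro θ
      exact mul_ne_zero (pow_ne_zero _ (hz0 θ)) (h1z θ)
    · refine Filter.Eventually.of_forall fun θ _ => ?_
      have hnorm : ‖deriv (circleMap 0 r) θ •
          (g n * circleMap 0 r θ ^ (2 * n) / (circleMap 0 r θ ^ (N + 1) * (1 - circleMap 0 r θ)))‖
          = r * (‖g n‖ * r ^ (2 * n)) / (r ^ (N + 1) * ‖1 - circleMap 0 r θ‖) := by
        rw [norm_smul, norm_div, norm_mul, norm_mul, norm_pow, norm_pow, hzr]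
        have : ‖deriv (circleMap 0 r) θ‖ = r := by
          simp [deriv_circleMap, norm_mul, hzr θ]
        rw [this]
        ring
      rw [hnorm]
      have hle : 1 - r ≤ ‖1 - circleMap 0 r θ‖ := by
        have := norm_sub_norm_le (1 : ℂ) (circleMap 0 r θ)
        simpa [hzr θ] using this
      rcases eq_or_lt_of_le (norm_nonneg (g n)) with hg0 | hg0
      · simp [← hg0]
      · have hA : 0 < r * (‖g n‖ * r ^ (2 * n)) :=
          mul_pos hr0 (mul_pos hg0 (pow_pos hr0 _))
        have hB : 0 < r ^ (N + 1) * ‖1 - circleMap 0 r θ‖ :=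
          mul_pos (pow_pos hr0 _) (norm_pos_iff.2 (h1z θ))
        have hC : 0 < r ^ (N + 1) * (1 - r) :=
          mul_pos (pow_pos hr0 _) (by linarith)
        exact (div_le_div_iff_of_pos_left hA hB hC).2
          (mul_le_mul_of_nonneg_left hle (pow_nonneg hr0.le _))
    · exact Filter.Eventually.of_forall fun θ _ => ((hg2.mul_left r).div_const _)
    · exact intervalIntegrable_const
    · refine Filter.Eventually.of_forall fun θ _ => ?_
      exact (((hsumz _ (hzr θ)).hasSum.div_const _).const_smul _)
  -- value of individual integrals
  have hval : ∀ n, (∮ z in C((0:ℂ), r), g n * z ^ (2 * n) / (z ^ (N + 1) * (1 - z)))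
      = if 2 * n ≤ N then g n * (2 * Real.pi * Complex.I) else 0 := by
    intro n
    by_cases hn : 2 * n ≤ N
    · rw [if_pos hn]
      have hcg : (∮ z in C((0:ℂ), r), g n * z ^ (2 * n) / (z ^ (N + 1) * (1 - z)))
          = ∮ z in C((0:ℂ), r), g n * ((1 - z)⁻¹ / z ^ (N - 2 * n + 1)) := by
        refine circleIntegral.integral_congr hr0.le fun z hz => ?_
        have hz0' : z ≠ 0 := by
          intro h; rw [h] at hz; simp [mem_sphere_zero_iff_norm] at hz; exact hr0.ne' hz.symm
        have h1z' : (1:ℂ) - z ≠ 0 :=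
          one_sub_ne_zero_of_abs_le hr1 (le_of_eq (mem_sphere_zero_iff_norm.1 hz))
        have hexp : N + 1 = 2 * n + (N - 2 * n + 1) := by omega
        rw [hexp, pow_add]
        field_simp
      rw [hcg, circleIntegral.integral_const_mul, circleIntegral_inv_one_sub r hr0 hr1]
    · rw [if_neg hn]
      have hcg : (∮ z in C((0:ℂ), r), g n * z ^ (2 * n) / (z ^ (N + 1) * (1 - z)))
          = ∮ z in C((0:ℂ), r), g n * (z ^ (2 * n - (N + 1)) * (1 - z)⁻¹) := by
        refine circleIntegral.integral_congr hr0.le fun z hz => ?_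
        have hz0' : z ≠ 0 := by
          intro h; rw [h] at hz; simp [mem_sphere_zero_iff_norm] at hz; exact hr0.ne' hz.symm
        have h1z' : (1:ℂ) - z ≠ 0 :=
          one_sub_ne_zero_of_abs_le hr1 (le_of_eq (mem_sphere_zero_iff_norm.1 hz))
        have hexp : 2 * n = (N + 1) + (2 * n - (N + 1)) := by omega
        rw [hexp, pow_add]
        field_simp
        simp
      rw [hcg, circleIntegral.integral_const_mul, circleIntegral_pow_mul_inv_one_sub r hr0 hr1,
        mul_zero]
  -- assemble
  have htsum := key.tsum_eq
  have hts : (∑' n, (∮ z in C((0:ℂ), r), g n * z ^ (2 * n) / (z ^ (N + 1) * (1 - z))))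
      = ∑ n ∈ (Finset.range (N + 1)).filter (fun n => 2 * n ≤ N),
          g n * (2 * Real.pi * Complex.I) := by
    rw [tsum_eq_sum (s := (Finset.range (N + 1)).filter (fun n => 2 * n ≤ N)) ?_]
    · refine Finset.sum_congr rfl fun n hn => ?_
      rw [hval n, if_pos (Finset.mem_filter.1 hn).2]
    · intro n hn
      rw [hval n, if_neg]
      intro h
      exact hn (Finset.mem_filter.2 ⟨Finset.mem_range.2 (by omega), h⟩)
  rw [← htsum, hts, ← Finset.sum_mul]
  field_simp
end
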